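/- arXiv:2212.09680 — 9 statements merged into one kernel-verified Lean document; each statement's English description precedes it below -/
import Mathlib

section
/- Let G(z) = 1 + Re( z · Log((1-z)/(1+z)) ). For every y ∈ (-1, 1), the function s ↦ G(s + iy) (for real s near 0) has derivative 0 at s = 0. (That is, the partial derivative of G in the direction of the real axis vanishes at every point of the imaginary-axis segment {iy : |y| < 1}; this is the homogeneous Neumann condition for G on the diameter of the half-disk.) -/
/-!
With `f z = z * Log ((1 - z) / (1 + z))` we have `G z = 1 + Re (f z)`. The reflection
`z ↦ -conj z` in the imaginary axis sends `(1 - z) / (1 + z)` to `conj ((1 - z) / (1 + z))⁻¹`,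
and `Log (conj w)⁻¹ = -conj (Log w)` for every `w` (also on the cut), so `f (-conj z) = conj (f z)`
and `G` is invariant under the reflection. Hence `s ↦ G (s + i y)` is even; it is differentiable
at `0` because `(1 - z) / (1 + z)` lies in the right half-plane for `|z| < 1`, and the derivative
of an even function at `0` vanishes.
-/

noncomputable def G (z : ℂ) : ℝ := 1 + (z * Complex.log ((1 - z) / (1 + z))).re

open Complex ComplexConjugate

theorem HasDerivAt.eq_zero_of_even {F : Type*} [NormedAddCommGroup F] [NormedSpace ℝ F]
    {f : ℝ → F} {f' : F} (hf : HasDerivAt f f' 0) (heven : Function.Even f) : f' = 0 := by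
  have hneg : HasDerivAt f (-f') 0 := by
    have h := (neg_zero (G := ℝ) ▸ hf).scomp (0 : ℝ) (hasDerivAt_neg (0 : ℝ))
    simpa [Function.comp_def, heven _] using h
  have h2 : (2 : ℝ) • f' = 0 := by
    rw [two_smul, eq_neg_iff_add_eq_zero.mp (hf.unique hneg)]
  exact (smul_eq_zero.mp h2).resolve_left two_ne_zero

theorem Complex.arg_inv_conj (w : ℂ) : arg (conj w)⁻¹ = arg w := by
  rw [arg_inv, arg_conj]
  split_ifs <;> grind [neg_pi_lt_arg w]

theorem Complex.log_inv_conj (w : ℂ) : log (conj w)⁻¹ = -conj (log w) := by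
  apply Complex.ext
  · simp [log_re, Real.log_inv]
  · simp [log_im, arg_inv_conj]

theorem Complex.one_sub_div_one_add_mem_slitPlane {z : ℂ} (hz : ‖z‖ < 1) :
    (1 - z) / (1 + z) ∈ slitPlane := by
  have hden : 0 < normSq (1 + z) :=
    normSq_pos.mpr (slitPlane_ne_zero (mem_slitPlane_of_norm_lt_one hz))
  have hre : ((1 - z) / (1 + z)).re = (1 - normSq z) / normSq (1 + z) := by
    rw [div_re, normSq_apply z]
    simp only [sub_re, one_re, add_re, sub_im, one_im, zero_sub, add_im, zero_add, neg_mul]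
    ring
  have hz2 : normSq z < 1 := by
    rw [normSq_eq_norm_sq]
    exact pow_lt_one₀ (norm_nonneg z) hz two_ne_zero
  exact mem_slitPlane_iff.mpr (Or.inl (hre ▸ div_pos (by linarith) hden))

theorem G_neg_conj (z : ℂ) : G (-conj z) = G z := by
  have hquot : (1 - -conj z) / (1 + -conj z) = (conj ((1 - z) / (1 + z)))⁻¹ := by
    simp [sub_eq_add_neg, add_comm]
  rw [G, G, hquot, log_inv_conj, neg_mul_neg, ← map_mul, conj_re]

theorem differentiableAt_G {z : ℂ} (hz : (1 - z) / (1 + z) ∈ slitPlane) :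
    DifferentiableAt ℝ G z := by
  have hden : 1 + z ≠ 0 := fun h => slitPlane_ne_zero hz (by simp [h])
  have hf : DifferentiableAt ℂ (fun z => z * log ((1 - z) / (1 + z))) z :=
    differentiableAt_id.mul (((differentiableAt_const _).sub differentiableAt_id).div
      ((differentiableAt_const _).add differentiableAt_id) hden |>.clog hz)
  exact (differentiableAt_const _).add (reCLM.differentiableAt.comp z (hf.restrictScalars ℝ))

theorem G_neumann_on_diameter (y : ℝ) (hy : y ∈ Set.Ioo (-1 : ℝ) 1) :
    HasDerivAt (fun s : ℝ => G ((s : ℂ) + (y : ℂ) * Complex.I)) 0 0 := by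
  set g := fun s : ℝ => G ((s : ℂ) + (y : ℂ) * Complex.I)
  have hnorm : ‖(y : ℂ) * I‖ < 1 := by simpa [abs_lt] using hy
  have hg : DifferentiableAt ℝ g 0 := by
    refine (differentiableAt_G ?_).comp (0 : ℝ) ?_
    · simpa using one_sub_div_one_add_mem_slitPlane hnorm
    · exact ofRealCLM.differentiableAt.add_const _
  have heven : Function.Even g := fun s => by
    simpa [g, add_comm] using G_neg_conj ((s : ℂ) + y * I)
  simpa [hg.hasDerivAt.eq_zero_of_even heven] using hg.hasDerivAt
end

section
/- Let G(z) = 1 + Re( z · Log((1-z)/(1+z)) ). For every z ∈ ℂ with |z| = 1 and z ≠ ±1, the function t ↦ G(t·z) (for real t near 1) has derivative equal to G(z) at t = 1. (That is, the outward radial derivative of G on the unit circle away from ±1 equals G itself: ∂_η G = G, so G satisfies the Robin boundary condition −∂_η G + G = 0.) -/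
/-!
Write `G = 1 + Re F` with `F w = w · Log ((1 - w) / (1 + w))`. For `|z| = 1`, `z ≠ ±1`, the point
`z` is non-real, so `(1 - z) / (1 + z)` is non-real as well and `F` is holomorphic at `z`. The
radial derivative of `G` at `z` is then `Re (z F'(z)) = Re (z Log (…)) + Re (-2z² / (1 - z²))`, and
`-2z² / (1 - z²) = 1 - (1 + z²) / (1 - z²)` has real part `1` because the Cayley transform
`ζ ↦ (1 + ζ) / (1 - ζ)` maps the unit circle to the imaginary axis.
-/

namespace Complex

theorem im_ne_zero_of_norm_eq_one {z : ℂ} (hz : ‖z‖ = 1) (h1 : z ≠ 1) (h2 : z ≠ -1) :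
    z.im ≠ 0 := by
  intro him
  have hre : z.re ^ 2 = 1 := by
    have h := normSq_eq_norm_sq z
    rw [hz, normSq_apply, him] at h
    linarith
  rcases sq_eq_one_iff.mp hre with h | h
  · exact h1 (ext h him)
  · exact h2 (ext (by simp [h]) (by simp [him]))

theorem im_one_sub_div_one_add (z : ℂ) :
    ((1 - z) / (1 + z)).im = -2 * z.im / normSq (1 + z) := by
  rw [div_im]
  simp only [sub_im, sub_re, add_re, add_im, one_re, one_im]
  ring

theorem one_sub_div_one_add_mem_slitPlane_s6 {z : ℂ} (h : z.im ≠ 0) :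
    (1 - z) / (1 + z) ∈ slitPlane := by
  have hnz : 1 + z ≠ 0 := fun h0 => h (by simpa using congrArg im h0)
  refine Or.inr ?_
  rw [im_one_sub_div_one_add]
  exact div_ne_zero (mul_ne_zero (by norm_num) h) (normSq_pos.mpr hnz).ne'

theorem re_one_add_div_one_sub_of_norm_eq_one {ζ : ℂ} (hζ : ‖ζ‖ = 1) :
    ((1 + ζ) / (1 - ζ)).re = 0 := by
  have hsq : ζ.re * ζ.re + ζ.im * ζ.im = 1 := by
    rw [← normSq_apply, normSq_eq_norm_sq, hζ, one_pow]
  rw [div_re]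
  simp only [add_re, add_im, sub_re, sub_im, one_re, one_im]
  rw [← add_div]
  exact div_eq_zero_iff.mpr (Or.inl (by linear_combination -hsq))

theorem hasDerivAt_log_one_sub_div_one_add {w : ℂ} (hw : (1 - w) / (1 + w) ∈ slitPlane) :
    HasDerivAt (fun w => log ((1 - w) / (1 + w))) (-2 / (1 - w ^ 2)) w := by
  have hne := slitPlane_ne_zero hw
  have hm : 1 - w ≠ 0 := fun h => hne (by simp [h])
  have hp : 1 + w ≠ 0 := fun h => hne (by simp [h])
  have hq : HasDerivAt (fun w : ℂ => (1 - w) / (1 + w))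
      ((-1 * (1 + w) - (1 - w) * 1) / (1 + w) ^ 2) w :=
    ((hasDerivAt_id w).const_sub 1).div ((hasDerivAt_id w).const_add 1) hp
  have hsq : 1 - w ^ 2 ≠ 0 := by
    rw [show 1 - w ^ 2 = (1 - w) * (1 + w) by ring]; exact mul_ne_zero hm hp
  convert hq.clog hw using 1
  field_simp
  ring

end Complex

theorem HasDerivAt.re_comp_ofReal_mul {f : ℂ → ℂ} {f' z : ℂ} (hf : HasDerivAt f f' z) :
    HasDerivAt (fun t : ℝ => (f (t * z)).re) (z * f').re 1 := by
  have hray : HasDerivAt (fun u : ℂ => u * z) z ((1 : ℝ) : ℂ) := by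
    simpa using (hasDerivAt_id (1 : ℂ)).mul_const z
  rw [mul_comm z f']
  exact (hf.comp_of_eq _ hray (by simp)).real_of_complex

theorem G_robin_condition (z : ℂ) (hz : ‖z‖ = 1) (h1 : z ≠ 1) (h2 : z ≠ -1) :
    HasDerivAt (fun t : ℝ => G ((t : ℂ) * z)) (G z) 1 := by
  have hslit :=
    Complex.one_sub_div_one_add_mem_slitPlane_s6 (Complex.im_ne_zero_of_norm_eq_one hz h1 h2)
  have hF : HasDerivAt (fun w => w * Complex.log ((1 - w) / (1 + w)))
      (Complex.log ((1 - z) / (1 + z)) + z * (-2 / (1 - z ^ 2))) z := by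
    simpa using (hasDerivAt_id' z).fun_mul (Complex.hasDerivAt_log_one_sub_div_one_add hslit)
  refine (hF.re_comp_ofReal_mul.const_add 1).congr_deriv ?_
  have hsq : 1 - z ^ 2 ≠ 0 := sub_ne_zero.mpr fun h => (sq_eq_one_iff.mp h.symm).elim h1 h2
  have hcayley : ((1 + z ^ 2) / (1 - z ^ 2)).re = 0 :=
    Complex.re_one_add_div_one_sub_of_norm_eq_one (by simp [hz])
  have hderiv : z * (Complex.log ((1 - z) / (1 + z)) + z * (-2 / (1 - z ^ 2)))
      = z * Complex.log ((1 - z) / (1 + z)) + (1 - (1 + z ^ 2) / (1 - z ^ 2)) := by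
    field_simp
    ring
  rw [hderiv, G, Complex.add_re, Complex.sub_re, Complex.one_re, hcayley]
  ring
end

section
/- Let G(z) = 1 + Re( z · Log((1-z)/(1+z)) ). There exists a constant C > 0 such that for every z ∈ ℂ with |z| ≤ 1 and 0 < |z-1| ≤ 1/2 one has |G(z) − log(|z-1|/2) − 1| ≤ C · |z-1| · (1 + |log |z-1||). -/
/-! Writing `z · Log w = Log w + (z - 1) · Log w` with `w = (1 - z)/(1 + z)` and
`Re Log w = log |z - 1| - log |1 + z|`, the error `G z - log (|z - 1|/2) - 1` becomes
`Re ((z - 1) · Log w) - log (|1 + z|/2)`. Since `|Im Log w| ≤ π`, the first term is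
`O(|z - 1| (1 + |log |z - 1||))`, and since `|1 + z|` lies within `|z - 1|` of `2`, the second
is `O(|z - 1|)`. -/

open Real

lemma Real.abs_log_le_abs_sub_one_div {x c : ℝ} (hc : 0 < c) (hc1 : c ≤ 1) (hx : c ≤ x) :
    |log x| ≤ |x - 1| / c := by
  have hx0 : 0 < x := hc.trans_le hx
  have hupper : log x ≤ |x - 1| / c :=
    calc log x ≤ x - 1 := log_le_sub_one_of_pos hx0
      _ ≤ |x - 1| := le_abs_self _
      _ ≤ |x - 1| / c := le_div_self (abs_nonneg _) hc hc1
  have hlower : -(|x - 1| / c) ≤ log x :=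
    calc -(|x - 1| / c) ≤ -(|x - 1| / x) := by gcongr
      _ ≤ (x - 1) / x := by rw [← neg_div]; gcongr; exact neg_abs_le _
      _ = 1 - x⁻¹ := by field_simp
      _ ≤ log x := one_sub_inv_le_log_of_pos hx0
  exact abs_le.mpr ⟨hlower, hupper⟩

lemma Complex.norm_log_le_abs_log_norm_add_pi (w : ℂ) :
    ‖log w‖ ≤ |Real.log ‖w‖| + π := by
  calc ‖log w‖ ≤ |(log w).re| + |(log w).im| := norm_le_abs_re_add_abs_im _
    _ ≤ |Real.log ‖w‖| + π := by rw [log_re, log_im]; gcongr; exact abs_arg_le_pi w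

lemma abs_norm_one_add_sub_two_le (z : ℂ) : |‖1 + z‖ - 2| ≤ ‖z - 1‖ := by
  simpa [show 1 + z - 2 = z - 1 by ring] using abs_norm_sub_norm_le (1 + z) 2

lemma G_sub_log_eq {z : ℂ} (h₁ : z ≠ 1) (h₂ : z ≠ -1) :
    G z - log (‖z - 1‖ / 2) - 1 =
      ((z - 1) * Complex.log ((1 - z) / (1 + z))).re - log (‖1 + z‖ / 2) := by
  set L := Complex.log ((1 - z) / (1 + z))
  have ha : ‖z - 1‖ ≠ 0 := norm_ne_zero_iff.mpr (sub_ne_zero.mpr h₁)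
  have hb : ‖1 + z‖ ≠ 0 := norm_ne_zero_iff.mpr (by contrapose! h₂; linear_combination h₂)
  have hre : L.re = log ‖z - 1‖ - log ‖1 + z‖ := by
    rw [Complex.log_re, norm_div, norm_sub_rev, Real.log_div ha hb]
  rw [G, show z * L = L + (z - 1) * L by ring, Complex.add_re, hre,
    Real.log_div ha two_ne_zero, Real.log_div hb two_ne_zero]
  ring

theorem G_log_expansion :
    ∃ C : ℝ, 0 < C ∧ ∀ z : ℂ, ‖z‖ ≤ 1 → 0 < ‖z - 1‖ →
      ‖z - 1‖ ≤ 1 / 2 →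
      |G z - Real.log (‖z - 1‖ / 2) - 1| ≤
        C * ‖z - 1‖ * (1 + |Real.log (‖z - 1‖)|) := by
  refine ⟨7, by norm_num, fun z _ ha0 ha => ?_⟩
  set a := ‖z - 1‖
  set b := ‖1 + z‖
  set L := Complex.log ((1 - z) / (1 + z))
  obtain ⟨hb_lower, hb_upper⟩ := abs_le.mp (abs_norm_one_add_sub_two_le z)
  have hb0 : 0 < b := by linarith
  have hz₁ : z ≠ 1 := sub_ne_zero.mp (norm_pos_iff.mp ha0)
  have hz₂ : z ≠ -1 := fun h => by simp [b, h] at hb0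
  have hlog_b : |log b| ≤ 3 / 2 :=
    (abs_log_le_abs_sub_one_div one_pos le_rfl (by linarith)).trans
      (by rw [div_one, abs_le]; constructor <;> linarith)
  have hlog_b2 : |log (b / 2)| ≤ a :=
    (abs_log_le_abs_sub_one_div one_half_pos one_half_lt_one.le (by linarith)).trans
      (by rw [div_le_iff₀ one_half_pos, abs_le]; constructor <;> linarith)
  have hL : ‖L‖ ≤ |log a| + 3 / 2 + π :=
    calc ‖L‖ ≤ |log ‖(1 - z) / (1 + z)‖| + π := Complex.norm_log_le_abs_log_norm_add_pi _
      _ = |log a - log b| + π := by rw [norm_div, norm_sub_rev, log_div ha0.ne' hb0.ne']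
      _ ≤ |log a| + 3 / 2 + π := by linarith [abs_sub (log a) (log b)]
  rw [G_sub_log_eq hz₁ hz₂]
  calc |((z - 1) * L).re - log (b / 2)| ≤ ‖(z - 1) * L‖ + |log (b / 2)| :=
        (abs_sub _ _).trans (add_le_add_left (Complex.abs_re_le_norm _) _)
    _ ≤ a * (|log a| + 3 / 2 + π) + a := by rw [norm_mul]; gcongr
    _ ≤ 7 * a * (1 + |log a|) := by
        nlinarith [mul_le_mul_of_nonneg_left pi_le_four ha0.le,
          mul_nonneg ha0.le (abs_nonneg (log a))]
end

section
/- Let u be a real-valued function that is harmonic on an open subset U of the plane ℝ² ≅ ℂ containing the closed unit disk. Suppose that for every z with |z| = 1 the radial derivative of u at z equals u(z), i.e., (Du)(z)[z] = u(z) where (Du)(z) denotes the (Fréchet) derivative of u at z. Then there exist real numbers a, b such that u(x, y) = a·x + b·y for every (x, y) in the closed unit disk. -/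
/-!
Near the closed disk `u` is the real part of a holomorphic `F`, and the Robin condition
`∂_r u = u` says that the holomorphic function `g = z F' - F` has vanishing real part on the unit
circle. By the maximum principle (applied to `exp (± g)`) `Re g` vanishes on the disk, so `g` is
constant there by the open mapping theorem. Then `g' = z F''` vanishes, so `F'' = 0` and `F` is
affine, `F z = F 0 + F' 0 * z` with `Re (F 0) = - Re (g 0) = 0`; taking real parts gives a linear
function.
-/

open Complex InnerProductSpace Metric Filter Topology

theorem Metric.exists_gt_ball_subset_of_closedBall_subset {E : Type*} [NormedAddCommGroup E]
    [NormedSpace ℝ E] [ProperSpace E] {U : Set E} {x : E} {r : ℝ} (hr : 0 ≤ r) (hU : IsOpen U)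
    (h : closedBall x r ⊆ U) : ∃ R, r < R ∧ ball x R ⊆ U := by
  obtain ⟨δ, hδ, hδU⟩ := (isCompact_closedBall x r).exists_thickening_subset_open hU h
  exact ⟨δ + r, by linarith, (thickening_closedBall hδ hr x).symm ▸ hδU⟩

theorem harmonicOnNhd_of_fderiv_fderiv_add {E : Type*} [NormedAddCommGroup E] [NormedSpace ℝ E]
    {u : ℂ → E} {U : Set ℂ} (hU : IsOpen U) (hreg : ContDiffOn ℝ 2 u U)
    (hharm : ∀ z ∈ U, fderiv ℝ (fun w ↦ fderiv ℝ u w 1) z 1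
      + fderiv ℝ (fun w ↦ fderiv ℝ u w I) z I = 0) :
    HarmonicOnNhd u U := by
  intro z hz
  refine ⟨hreg.contDiffAt (hU.mem_nhds hz), ?_⟩
  filter_upwards [hU.mem_nhds hz] with w hw
  have hd : DifferentiableAt ℝ (fderiv ℝ u) w :=
    ((hreg.contDiffAt (hU.mem_nhds hw)).fderiv_right (m := 1) (by norm_num)).differentiableAt
      one_ne_zero
  simpa [laplacian_eq_iteratedFDeriv_complexPlane, iteratedFDeriv_two_apply,
    fderiv_clm_apply hd (differentiableAt_const _)] using hharm w hw

theorem fderiv_re_apply {F : ℂ → ℂ} {z : ℂ} (hF : DifferentiableAt ℂ F z) (v : ℂ) :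
    fderiv ℝ (fun w ↦ (F w).re) z v = (deriv F z * v).re := by
  have h : HasFDerivAt (fun w ↦ (F w).re)
      (reCLM.comp (deriv F z • (1 : ℂ →L[ℝ] ℂ))) z :=
    reCLM.hasFDerivAt.comp z hF.hasDerivAt.complexToReal_fderiv
  simp [h.fderiv, mul_comm]

theorem DiffContOnCl.re_le_of_forall_mem_frontier_re_le {g : ℂ → ℂ} {s : Set ℂ}
    (hs : Bornology.IsBounded s) (hg : DiffContOnCl ℂ g s) {C : ℝ}
    (hC : ∀ z ∈ frontier s, (g z).re ≤ C) {z : ℂ} (hz : z ∈ closure s) :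
    (g z).re ≤ C := by
  have hexp : DiffContOnCl ℂ (fun w ↦ exp (g w)) s := ⟨hg.1.cexp, hg.2.cexp⟩
  simpa [Complex.norm_exp] using norm_le_of_forall_mem_frontier_norm_le hs hexp (C := Real.exp C)
    (fun w hw ↦ by simpa [Complex.norm_exp] using hC w hw) hz

theorem DiffContOnCl.re_eq_zero_of_forall_mem_frontier_re_eq_zero {g : ℂ → ℂ} {s : Set ℂ}
    (hs : Bornology.IsBounded s) (hg : DiffContOnCl ℂ g s)
    (h : ∀ z ∈ frontier s, (g z).re = 0) {z : ℂ} (hz : z ∈ closure s) : (g z).re = 0 := by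
  have hle := hg.re_le_of_forall_mem_frontier_re_le hs (fun w hw ↦ (h w hw).le) hz
  have hge := hg.neg.re_le_of_forall_mem_frontier_re_le hs (C := 0)
    (fun w hw ↦ by simp [h w hw]) hz
  simp only [Pi.neg_apply, neg_re, neg_nonpos] at hge
  exact le_antisymm hle hge

theorem IsOpen.eqOn_affine_of_deriv_deriv_eq_zero {𝕜 E : Type*} [RCLike 𝕜]
    [NormedAddCommGroup E] [NormedSpace 𝕜 E] {f : 𝕜 → E} {s : Set 𝕜} {x : 𝕜}
    (hs : IsOpen s) (hs' : IsPreconnected s) (hf : DifferentiableOn 𝕜 f s)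
    (hf' : DifferentiableOn 𝕜 (deriv f) s) (hf'' : s.EqOn (deriv (deriv f)) 0) (hx : x ∈ s) :
    s.EqOn f (fun y ↦ f x + (y - x) • deriv f x) := by
  have hderiv : s.EqOn (deriv f) (fun _ ↦ deriv f x) :=
    hs.eqOn_of_deriv_eq hs' hf' (differentiableOn_const _)
      (fun y hy ↦ by simpa using hf'' hy) hx rfl
  refine hs.eqOn_of_deriv_eq hs' hf (by fun_prop) (fun y hy ↦ ?_) hx (by simp)
  rw [hderiv hy, ((((hasDerivAt_id' y).sub_const x).smul_const (deriv f x)).const_add (f x)).deriv,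
    one_smul]

theorem DifferentiableAt.hasDerivAt_mul_deriv_sub {F : ℂ → ℂ} {z : ℂ}
    (hF : DifferentiableAt ℂ F z) (hF' : DifferentiableAt ℂ (deriv F) z) :
    HasDerivAt (fun w ↦ w * deriv F w - F w) (z * deriv (deriv F) z) z := by
  have h := ((hasDerivAt_id' z).fun_mul hF'.hasDerivAt).fun_sub hF.hasDerivAt
  exact h.congr_deriv (by ring)

theorem AnalyticOnNhd.eqOn_affine_of_re_mul_deriv_sub_eq_zero {F : ℂ → ℂ} {r R : ℝ}
    (hr : 0 < r) (hrR : r < R) (hF : AnalyticOnNhd ℂ F (ball 0 R))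
    (hbd : ∀ z ∈ sphere (0 : ℂ) r, (z * deriv F z - F z).re = 0) :
    (F 0).re = 0 ∧ (ball 0 R).EqOn F (fun z ↦ F 0 + deriv F 0 * z) := by
  set g : ℂ → ℂ := fun z ↦ z * deriv F z - F z
  have hg : AnalyticOnNhd ℂ g (ball 0 R) := (analyticOnNhd_id.mul hF.deriv).sub hF
  have hsub : closedBall (0 : ℂ) r ⊆ ball 0 R := closedBall_subset_ball hrR
  have hre : ∀ z ∈ ball (0 : ℂ) r, (g z).re = 0 := fun z hz ↦
    (hg.differentiableOn.diffContOnCl_ball hsub).re_eq_zero_of_forall_mem_frontier_re_eq_zero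
      isBounded_ball (fun w hw ↦ hbd w (frontier_ball_subset_sphere hw)) (subset_closure hz)
  obtain ⟨c, hc⟩ := (hg.mono (ball_subset_closedBall.trans hsub)).eq_const_of_re_eq_const hre
    isOpen_ball (isConnected_ball hr)
  have hF'' : ∀ z ∈ ball (0 : ℂ) r, z * deriv (deriv F) z = 0 := by
    intro z hz
    have hzR : z ∈ ball (0 : ℂ) R := ball_subset_closedBall.trans hsub hz
    rw [← ((hF z hzR).differentiableAt.hasDerivAt_mul_deriv_sub
      (hF.deriv z hzR).differentiableAt).deriv, EventuallyEq.deriv_eq (f := fun _ ↦ c)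
      (eventually_of_mem (isOpen_ball.mem_nhds hz) hc), deriv_const]
  have hF''R : (ball (0 : ℂ) R).EqOn (deriv (deriv F)) 0 := by
    refine hF.deriv.deriv.eqOn_zero_of_preconnected_of_frequently_eq_zero
      (convex_ball 0 R).isPreconnected (mem_ball_self (hr.trans hrR)) ?_
    have hev : ∀ᶠ z in 𝓝[≠] (0 : ℂ), deriv (deriv F) z = 0 := by
      filter_upwards [nhdsWithin_le_nhds (ball_mem_nhds 0 hr), self_mem_nhdsWithin] with z hz hz0
      exact (mul_eq_zero.1 (hF'' z hz)).resolve_left hz0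
    exact hev.frequently
  refine ⟨?_, ?_⟩
  · simpa [g] using hre 0 (mem_ball_self hr)
  · intro z hz
    simpa [mul_comm] using isOpen_ball.eqOn_affine_of_deriv_deriv_eq_zero
      (convex_ball 0 R).isPreconnected hF.differentiableOn hF.deriv.differentiableOn hF''R
      (mem_ball_self (hr.trans hrR)) hz

theorem kernel_of_free_boundary_jacobi_on_disk
    (U : Set ℂ) (hU : IsOpen U) (hball : Metric.closedBall (0 : ℂ) 1 ⊆ U)
    (u : ℂ → ℝ)
    (hreg : ContDiffOn ℝ 2 u U)
    (hharm : ∀ z ∈ U,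
      fderiv ℝ (fun w : ℂ => fderiv ℝ u w 1) z 1
        + fderiv ℝ (fun w : ℂ => fderiv ℝ u w Complex.I) z Complex.I = 0)
    (hbdry : ∀ z : ℂ, ‖z‖ = 1 → fderiv ℝ u z z = u z) :
    ∃ a b : ℝ, ∀ z : ℂ, ‖z‖ ≤ 1 → u z = a * z.re + b * z.im := by
  obtain ⟨R, hR, hRU⟩ := exists_gt_ball_subset_of_closedBall_subset zero_le_one hU hball
  obtain ⟨F, hF, hFu⟩ :=
    ((harmonicOnNhd_of_fderiv_fderiv_add hU hreg hharm).mono hRU).exists_analyticOnNhd_ball_re_eq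
  have hbdF : ∀ z ∈ sphere (0 : ℂ) 1, (z * deriv F z - F z).re = 0 := by
    intro z hz
    have hzR : z ∈ ball (0 : ℂ) R :=
      sphere_subset_closedBall.trans (closedBall_subset_ball hR) hz
    have hdu : fderiv ℝ u z = fderiv ℝ (fun w ↦ (F w).re) z :=
      EventuallyEq.fderiv_eq (eventually_of_mem (isOpen_ball.mem_nhds hzR)
        fun w hw ↦ (hFu hw).symm)
    have h := hbdry z (mem_sphere_zero_iff_norm.1 hz)
    rw [hdu, fderiv_re_apply (hF z hzR).differentiableAt, ← hFu hzR] at h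
    simp [← h, mul_comm]
  obtain ⟨hF0, hFaff⟩ := hF.eqOn_affine_of_re_mul_deriv_sub_eq_zero one_pos hR hbdF
  refine ⟨(deriv F 0).re, -(deriv F 0).im, fun z hz ↦ ?_⟩
  have hzR : z ∈ ball (0 : ℂ) R := mem_ball_zero_iff.2 (hz.trans_lt hR)
  rw [← hFu hzR]
  simp [hFaff hzR, hF0]
  ring
end

section
/- Let G(z) = 1 + Re( z · Log((1-z)/(1+z)) ). There exists a constant C > 0 such that for every τ > 0, every ϖ ∈ ℝ, and every z ∈ ℂ with |z| ≤ 1 and 0 < |z-1| ≤ 1/2, the function φ(z) := τ·G(z) + ϖ·Re(z) satisfies |φ(z) − τ·log(2|z-1|/τ) − τ·log(eτ/4) − ϖ| ≤ C·( τ·(1 + |log |z-1||) + |ϖ| )·|z-1|. (In other words, φ = τ log(2 d_p/τ) + 𝓜φ + O(d_p |log d_p|) near p = 1, where the mismatch is 𝓜φ = τ log(eτ/4) + ϖ and d_p = |z-1|.) -/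
/-!
Write `d = ‖z - 1‖`. Since `|(1 - z)/(1 + z)| = d / ‖1 + z‖` and `‖1 + z‖ = 2 + O(d)`,
`G z = 1 + Re z · log (d / ‖1 + z‖) - Im z · arg ((1 - z)/(1 + z)) = 1 + log (d / 2) + O(d |log d|)`,
because `Re z - 1`, `Im z` and `log (‖1 + z‖ / 2)` are all `O(d)` and the argument is bounded by `π`.
The two logarithms of the statement add up to `1 + log (d / 2)`, so the mismatch is
`τ (G z - 1 - log (d / 2)) + ϖ (Re z - 1)`.
-/

open Real

lemma Real.abs_log_le_two_mul_abs_sub_one {x : ℝ} (hx : 1 / 2 ≤ x) :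
    |log x| ≤ 2 * |x - 1| := by
  have hx0 : 0 < x := by linarith
  have hupper : log x ≤ x - 1 := log_le_sub_one_of_pos hx0
  have hlower : 1 - x⁻¹ ≤ log x := one_sub_inv_le_log_of_pos hx0
  have hinv : x⁻¹ - 1 ≤ 2 * |x - 1| := by
    rw [show x⁻¹ - 1 = (1 - x) / x by field_simp, div_le_iff₀ hx0]
    nlinarith [le_abs_self (x - 1), neg_abs_le (x - 1)]
  rw [abs_le]
  constructor <;> linarith [le_abs_self (x - 1)]

lemma abs_log_norm_one_add_div_two_le {z : ℂ} (hz : ‖z - 1‖ ≤ 1) :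
    |log (‖1 + z‖ / 2)| ≤ ‖z - 1‖ := by
  have hdist : |‖1 + z‖ - 2| ≤ ‖z - 1‖ := by
    simpa [show 1 + z - 2 = z - 1 by ring] using abs_norm_sub_norm_le (1 + z) 2
  have hhalf : |‖1 + z‖ / 2 - 1| ≤ ‖z - 1‖ / 2 := by
    rw [show ‖1 + z‖ / 2 - 1 = (‖1 + z‖ - 2) / 2 by ring, abs_div, abs_two]
    linarith
  have hx : 1 / 2 ≤ ‖1 + z‖ / 2 := by linarith [(abs_le.mp hhalf).1]
  linarith [Real.abs_log_le_two_mul_abs_sub_one hx]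

lemma re_mul_log_one_sub_div_one_add_sub_log {z : ℂ} (h1 : z ≠ 1) (h2 : 1 + z ≠ 0) :
    (z * Complex.log ((1 - z) / (1 + z))).re - log (‖z - 1‖ / 2) =
      (z.re - 1) * log (‖z - 1‖ / 2) - z.re * log (‖1 + z‖ / 2)
        - z.im * Complex.arg ((1 - z) / (1 + z)) := by
  have hd : ‖z - 1‖ ≠ 0 := norm_ne_zero_iff.mpr (sub_ne_zero.mpr h1)
  have ha : ‖1 + z‖ ≠ 0 := norm_ne_zero_iff.mpr h2
  rw [Complex.mul_re, Complex.log_re, Complex.log_im, norm_div, norm_sub_rev 1 z,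
    log_div hd two_ne_zero, log_div ha two_ne_zero, log_div hd ha]
  ring

lemma abs_G_sub_one_sub_log_le {z : ℂ} (hz : ‖z‖ ≤ 1) (h1 : z ≠ 1) (hd : ‖z - 1‖ ≤ 1) :
    |G z - 1 - log (‖z - 1‖ / 2)| ≤ 5 * (1 + |log ‖z - 1‖|) * ‖z - 1‖ := by
  have h2 : 1 + z ≠ 0 := by
    intro h
    rw [show z = -1 by linear_combination h] at hd
    norm_num at hd
  set d := ‖z - 1‖
  have hd0 : 0 < d := norm_pos_iff.mpr (sub_ne_zero.mpr h1)
  have hre : |z.re - 1| ≤ d := by simpa using Complex.abs_re_le_norm (z - 1)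
  have him : |z.im| ≤ d := by simpa using Complex.abs_im_le_norm (z - 1)
  have hlog_half : |log (d / 2)| ≤ |log d| + log 2 := by
    rw [log_div hd0.ne' two_ne_zero]
    exact (abs_sub _ _).trans (by rw [abs_of_pos (log_pos one_lt_two)])
  have b1 : |(z.re - 1) * log (d / 2)| ≤ d * (|log d| + log 2) := by
    rw [abs_mul]; exact mul_le_mul hre hlog_half (abs_nonneg _) hd0.le
  have b2 : |z.re * log (‖1 + z‖ / 2)| ≤ d := by
    rw [abs_mul]
    simpa using mul_le_mul ((Complex.abs_re_le_norm z).trans hz)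
      (abs_log_norm_one_add_div_two_le hd) (abs_nonneg _) zero_le_one
  have b3 : |z.im * Complex.arg ((1 - z) / (1 + z))| ≤ d * π := by
    rw [abs_mul]; exact mul_le_mul him (Complex.abs_arg_le_pi _) (abs_nonneg _) hd0.le
  have hconst : log 2 + 1 + π ≤ 5 := by
    linarith [log_two_lt_d9, pi_lt_d2]
  rw [G, add_sub_cancel_left, re_mul_log_one_sub_div_one_add_sub_log h1 h2]
  have htri := (abs_sub _ _).trans (add_le_add ((abs_sub _ _).trans (add_le_add b1 b2)) b3)
  nlinarith [mul_nonneg hd0.le (abs_nonneg (log d))]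

lemma log_two_mul_div_add_log_exp_mul_div_four {d τ : ℝ} (hd : 0 < d) (hτ : 0 < τ) :
    log (2 * d / τ) + log (exp 1 * τ / 4) = 1 + log (d / 2) := by
  rw [← log_mul (by positivity) (by positivity),
    show 2 * d / τ * (exp 1 * τ / 4) = exp 1 * (d / 2) by field_simp; ring,
    log_mul (exp_ne_zero 1) (by positivity), log_exp]

theorem LD_solution_mismatch_expansion :
    ∃ C : ℝ, 0 < C ∧ ∀ τ : ℝ, 0 < τ → ∀ ϖ : ℝ, ∀ z : ℂ,
      ‖z‖ ≤ 1 → 0 < ‖z - 1‖ → ‖z - 1‖ ≤ 1 / 2 →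
      |τ * G z + ϖ * z.re - τ * Real.log (2 * ‖z - 1‖ / τ)
          - τ * Real.log (Real.exp 1 * τ / 4) - ϖ| ≤
        C * (τ * (1 + |Real.log (‖z - 1‖)|) + |ϖ|) * ‖z - 1‖ := by
  refine ⟨5, by norm_num, fun τ hτ ϖ z hz hd0 hd => ?_⟩
  have h1 : z ≠ 1 := sub_ne_zero.mp (norm_pos_iff.mp hd0)
  have hG := abs_G_sub_one_sub_log_le hz h1 (by linarith)
  have hre : |z.re - 1| ≤ ‖z - 1‖ := by simpa using Complex.abs_re_le_norm (z - 1)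
  have hlogs := log_two_mul_div_add_log_exp_mul_div_four hd0 hτ
  calc _ = |τ * (G z - 1 - log (‖z - 1‖ / 2)) + ϖ * (z.re - 1)| := by
        congr 1; linear_combination -τ * hlogs
    _ ≤ τ * (5 * (1 + |log ‖z - 1‖|) * ‖z - 1‖) + |ϖ| * ‖z - 1‖ := by
        refine (abs_add_le _ _).trans (add_le_add ?_ ?_) <;> rw [abs_mul]
        · rw [abs_of_pos hτ]; exact mul_le_mul_of_nonneg_left hG hτ.le
        · exact mul_le_mul_of_nonneg_left hre (abs_nonneg _)
    _ ≤ _ := by nlinarith [mul_nonneg (abs_nonneg ϖ) hd0.le]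
end

section
/- For ϖ ∈ (0, 1) define τ̲ = τ̲(ϖ) := exp( log((4/e)·|log ϖ|) / log ϖ ) · ϖ / |log ϖ| (note log ϖ < 0 and |log ϖ| = −log ϖ). Then ( τ̲·log τ̲ + ϖ + τ̲·log(e/4) ) / τ̲ tends to 0 as ϖ → 0⁺. -/
noncomputable def tauLower (ϖ : ℝ) : ℝ :=
  Real.exp (Real.log ((4 / Real.exp 1) * |Real.log ϖ|) / Real.log ϖ) * ϖ / |Real.log ϖ|

/-!
Put ϖ = exp (-L) and x = log (4L/e) / L. Then log τ̲ = -x - L - log L and ϖ / τ̲ = L eˣ, and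
since x L = log 4 - 1 + log L the quotient collapses to exactly L (eˣ - 1 - x) - x.
As L → ∞ we have x → 0 and L x² = log² (4L/e) / L → 0, while |eˣ - 1 - x| ≤ x² for |x| ≤ 1.
-/

open Real Filter Topology

lemma tendsto_pow_log_const_mul_div_atTop {c : ℝ} (hc : 0 < c) (n : ℕ) :
    Tendsto (fun L : ℝ => log (c * L) ^ n / L) atTop (𝓝 0) := by
  have h := (tendsto_pow_log_div_mul_add_atTop c⁻¹ 0 n (inv_ne_zero hc.ne')).comp
    (tendsto_id.const_mul_atTop hc)
  refine h.congr' (Eventually.of_forall fun L => ?_)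
  simp [inv_mul_cancel_left₀ hc.ne']

lemma Filter.Tendsto.mul_exp_sub_one_sub {α : Type*} {l : Filter α} {g x : α → ℝ}
    (hx : Tendsto x l (𝓝 0)) (hgx : Tendsto (fun a => g a * x a ^ 2) l (𝓝 0)) :
    Tendsto (fun a => g a * (Real.exp (x a) - 1 - x a)) l (𝓝 0) := by
  refine squeeze_zero_norm' ?_ (by simpa using hgx.abs)
  filter_upwards [hx.eventually (Metric.closedBall_mem_nhds 0 one_pos)] with a ha
  rw [dist_zero_right, norm_eq_abs] at ha
  rw [norm_mul, norm_eq_abs, norm_eq_abs]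
  exact mul_le_mul_of_nonneg_left (abs_exp_sub_one_sub_id_le ha) (abs_nonneg _)

lemma tauLower_mismatch_exp_neg {L : ℝ} (hL : 0 < L) :
    let τ := tauLower (exp (-L))
    let x := log (4 / exp 1 * L) / L
    (τ * log τ + exp (-L) + τ * log (exp 1 / 4)) / τ = L * (exp x - 1 - x) - x := by
  intro τ x
  have hτ : τ = exp (-x) * exp (-L) / L := by
    simp only [τ, x, tauLower, log_exp, abs_neg, abs_of_pos hL, div_neg]
  have hτ0 : τ ≠ 0 := by rw [hτ]; positivity
  have hlogτ : log τ = -x - L - log L := by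
    rw [hτ, log_div (by positivity) hL.ne', log_mul (exp_ne_zero _) (exp_ne_zero _), log_exp,
      log_exp]
    ring
  have hxL : x * L = log 4 - 1 + log L := by
    simp only [x, div_mul_cancel₀ _ hL.ne']
    rw [log_mul (by positivity) hL.ne', log_div (by norm_num) (exp_ne_zero _), log_exp]
  have hlog : log (exp 1 / 4) = 1 - log 4 := by
    rw [log_div (exp_ne_zero _) (by norm_num), log_exp]
  calc (τ * log τ + exp (-L) + τ * log (exp 1 / 4)) / τ
      = log τ + log (exp 1 / 4) + exp (-L) / τ := by field_simp; ring
    _ = -x - L - log L + (1 - log 4) + L * exp x := by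
        rw [hlogτ, hlog, hτ, exp_neg x]; field_simp
    _ = L * (exp x - 1 - x) - x := by linear_combination hxL

theorem tauLower_mismatch_little_o :
    Filter.Tendsto
      (fun ϖ : ℝ =>
        (tauLower ϖ * Real.log (tauLower ϖ) + ϖ + tauLower ϖ * Real.log (Real.exp 1 / 4))
          / tauLower ϖ)
      (nhdsWithin 0 (Set.Ioi 0)) (nhds 0) := by
  have hc : (0 : ℝ) < 4 / exp 1 := by positivity
  have hx : Tendsto (fun L => log (4 / exp 1 * L) / L) atTop (𝓝 0) := by
    simpa using tendsto_pow_log_const_mul_div_atTop hc 1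
  have hLx2 : Tendsto (fun L => L * (log (4 / exp 1 * L) / L) ^ 2) atTop (𝓝 0) := by
    refine (tendsto_pow_log_const_mul_div_atTop hc 2).congr' ?_
    filter_upwards [eventually_ne_atTop 0] with L hL
    field_simp
  have hlimit := ((hx.mul_exp_sub_one_sub hLx2).sub hx).comp
    (tendsto_neg_atBot_atTop.comp tendsto_log_nhdsGT_zero)
  rw [sub_zero] at hlimit
  refine hlimit.congr' ?_
  filter_upwards [Ioo_mem_nhdsGT (zero_lt_one' ℝ)] with ϖ ⟨hϖ0, hϖ1⟩
  have hL : 0 < -log ϖ := neg_pos.mpr (log_neg hϖ0 hϖ1)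
  simpa only [Function.comp_apply, neg_neg, exp_log hϖ0] using (tauLower_mismatch_exp_neg hL).symm
end

section
/- There exists ϖ₀ ∈ (0, 1) such that for every ϖ ∈ (0, ϖ₀] and every ζ ∈ [−τ̲, τ̲], where τ̲ = τ̲(ϖ) := exp( log((4/e)·|log ϖ|) / log ϖ ) · ϖ / |log ϖ|, the number τ := e^{ζ/ϖ} · τ̲ satisfies | τ·log(eτ/4) + ϖ + ζ | ≤ τ̲ / 2. (Prescribed mismatch: the LD solution φ⟦ζ; ϖ⟧ with strength τ[ζ,ϖ] = e^{ζ/ϖ} τ̲ and mismatch 𝓜φ = τ log(eτ/4) + ϖ satisfies |𝓜φ + ζ| ≤ τ̲/2.) -/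
/-!
Write `ϖ = exp (-L)`. Then `τ̲ = exp a * ϖ / L` with `a = -log ((4/e) L) / L`, and with
`u = ζ / ϖ + a` the strength is `τ = exp u * ϖ / L`. The choice of `a` cancels the large terms:
`τ log (e τ / 4) + ϖ + ζ = ϖ (u e^u / L + a (e^u - 1) - (e^u - 1 - u))`.
Here `a`, `u` and `1 / L` are all `O(δ)` with `δ = log L / L`, so the bracket is `O(δ²)`, which
is below `e^a / (2L)` as soon as `(log L)² ≪ L`.
-/

open Real

lemma log_four_div_exp_one_nonneg : 0 ≤ log (4 / exp 1) :=
  log_nonneg <| (one_le_div (exp_pos 1)).2 (exp_one_lt_d9.trans (by norm_num)).le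

lemma log_four_div_exp_one_le_one : log (4 / exp 1) ≤ 1 := by
  rw [log_div (by norm_num) (exp_ne_zero 1), log_exp, sub_le_iff_le_add,
    log_le_iff_le_exp (by norm_num), exp_add]
  nlinarith [exp_one_gt_d9]

lemma sq_log_le_self {L : ℝ} (hL : 10 ^ 8 ≤ L) : 120 * log L ^ 2 ≤ L := by
  have hL0 : 0 < L := by linarith
  set Q := √(√L)
  have hQ : Q ^ 2 = √L := sq_sqrt (sqrt_nonneg L)
  have hsqrt : 10 ^ 4 ≤ √L := le_sqrt_of_sq_le (by linarith)
  have hlogQ : log L = 4 * log Q := by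
    rw [log_sqrt (sqrt_nonneg L), log_sqrt hL0.le]; ring
  have hlog : log L ≤ 4 * Q := by
    have := log_le_sub_one_of_pos (show 0 < Q by positivity); linarith
  have hlog0 : 0 ≤ log L := log_nonneg (by linarith)
  nlinarith [sq_sqrt hL0.le]

noncomputable def tauExponent (L : ℝ) : ℝ := -(log (4 / exp 1 * L) / L)

lemma tauLower_exp_neg {L : ℝ} (hL : 0 < L) :
    tauLower (exp (-L)) = exp (tauExponent L) * exp (-L) / L := by
  rw [tauLower, tauExponent, log_exp, abs_neg, abs_of_pos hL, div_neg]

lemma tauExponent_mul_self {L : ℝ} (hL : L ≠ 0) : tauExponent L * L = -log (4 / exp 1 * L) := by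
  rw [tauExponent, neg_mul, div_mul_cancel₀ _ hL]

lemma tauExponent_eq {L : ℝ} (hL : 0 < L) :
    tauExponent L = -((log (4 / exp 1) + log L) / L) := by
  rw [tauExponent, log_mul (by positivity) hL.ne']

lemma tauExponent_nonpos {L : ℝ} (hL : 1 ≤ L) : tauExponent L ≤ 0 := by
  rw [tauExponent_eq (by linarith), neg_nonpos]
  have := log_four_div_exp_one_nonneg
  have := log_nonneg hL
  positivity

lemma abs_tauExponent_le {L : ℝ} (hL : exp 1 ≤ L) : |tauExponent L| ≤ 2 * (log L / L) := by
  have hL0 : 0 < L := (exp_pos 1).trans_le hL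
  have hlog : 1 ≤ log L := (le_log_iff_exp_le hL0).2 hL
  rw [abs_of_nonpos (tauExponent_nonpos (by linarith [add_one_le_exp 1])),
    tauExponent_eq hL0, neg_neg, ← mul_div_assoc]
  gcongr
  linarith [log_four_div_exp_one_le_one]

lemma mismatch_eq {L u : ℝ} (hL : 0 < L) :
    exp u * exp (-L) / L * log (exp 1 * (exp u * exp (-L) / L) / 4) + exp (-L) +
        (u - tauExponent L) * exp (-L) =
      exp (-L) * (u * exp u / L + tauExponent L * (exp u - 1) - (exp u - 1 - u)) := by
  have hlog : log (exp 1 * (exp u * exp (-L) / L) / 4) = u - L + tauExponent L * L := by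
    rw [tauExponent_mul_self hL.ne', show exp 1 * (exp u * exp (-L) / L) / 4 =
      exp (u - L) / (4 / exp 1 * L) by rw [exp_sub, exp_neg]; field_simp,
      log_div (exp_ne_zero _) (by positivity), log_exp]
    ring
  rw [hlog]
  field_simp
  ring

lemma abs_mismatch_le {L δ a u : ℝ} (hL : 0 < L) (hLδ : 1 / L ≤ δ) (ha : |a| ≤ 2 * δ)
    (hu : |u| ≤ 3 * δ) (hu1 : |u| ≤ 1) :
    |u * exp u / L + a * (exp u - 1) - (exp u - 1 - u)| ≤ 30 * δ ^ 2 := by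
  have hexp : exp u ≤ 3 :=
    (exp_le_exp.2 (le_of_abs_le hu1)).trans (exp_one_lt_d9.trans (by norm_num)).le
  calc |u * exp u / L + a * (exp u - 1) - (exp u - 1 - u)|
      ≤ |u * exp u / L| + |a * (exp u - 1)| + |exp u - 1 - u| :=
        (abs_sub _ _).trans (add_le_add_left (abs_add_le _ _) _)
    _ ≤ |u| * 3 * (1 / L) + |a| * (2 * |u|) + |u| ^ 2 := by
      rw [abs_div, abs_mul, abs_mul, abs_of_pos (exp_pos u), abs_of_pos hL, sq_abs, mul_one_div]
      gcongr
      · exact abs_exp_sub_one_le hu1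
      · exact abs_exp_sub_one_sub_id_le hu1
    _ ≤ 3 * δ * 3 * δ + 2 * δ * (2 * (3 * δ)) + (3 * δ) ^ 2 := by
      have : 0 ≤ δ := (one_div_pos.2 hL).le.trans hLδ
      gcongr
    _ = 30 * δ ^ 2 := by ring

lemma abs_mismatch_exp_neg_le {L ζ : ℝ} (hL : 10 ^ 8 ≤ L) (hζ : |ζ| ≤ tauLower (exp (-L))) :
    |exp (ζ / exp (-L)) * tauLower (exp (-L)) *
        log (exp 1 * (exp (ζ / exp (-L)) * tauLower (exp (-L))) / 4) + exp (-L) + ζ| ≤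
      tauLower (exp (-L)) / 2 := by
  have hL0 : 0 < L := by linarith
  have he : exp 1 ≤ L := by linarith [exp_one_lt_d9]
  have hM : 1 ≤ log L := (le_log_iff_exp_le hL0).2 he
  have hML := sq_log_le_self hL
  set δ := log L / L
  set a := tauExponent L
  have ha_nonpos : a ≤ 0 := tauExponent_nonpos (by linarith)
  have ha := abs_tauExponent_le he
  have hLδ : 1 / L ≤ δ := div_le_div_of_nonneg_right hM hL0.le
  have hδ_sq : 120 * δ ^ 2 * L ≤ 1 := by
    simp only [δ]; rw [div_pow, mul_div_assoc', div_mul_eq_mul_div, div_le_one (by positivity),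
      sq L]
    exact mul_le_mul_of_nonneg_right hML hL0.le
  have hδ : δ ≤ 1 / 120 := by
    rw [div_le_iff₀ hL0] at hLδ; nlinarith
  have hexp_a : 1 / 2 ≤ exp a := by linarith [add_one_le_exp a, neg_abs_le a]
  rw [tauLower_exp_neg hL0] at hζ ⊢
  set s := ζ / exp (-L)
  have hs : |s| ≤ 1 / L := by
    rw [abs_div, abs_of_pos (exp_pos _), div_le_iff₀ (exp_pos _)]
    calc |ζ| ≤ exp a * exp (-L) / L := hζ
      _ ≤ 1 * exp (-L) / L := by gcongr; exact exp_le_one_iff.2 ha_nonpos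
      _ = 1 / L * exp (-L) := by ring
  set u := s + a
  have hu : |u| ≤ 3 * δ := by linarith [abs_add_le s a]
  have hu1 : |u| ≤ 1 := by linarith
  have hτ : exp s * (exp a * exp (-L) / L) = exp u * exp (-L) / L := by
    rw [exp_add]; ring
  have hζ_eq : ζ = (u - a) * exp (-L) := by
    simp only [u, s, add_sub_cancel_right]; field_simp
  rw [hτ, hζ_eq, mismatch_eq hL0, abs_mul, abs_of_pos (exp_pos _)]
  calc exp (-L) * |u * exp u / L + a * (exp u - 1) - (exp u - 1 - u)|
      ≤ exp (-L) * (30 * δ ^ 2) := by gcongr; exact abs_mismatch_le hL0 hLδ ha hu hu1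
    _ ≤ exp (-L) * (1 / 2 / (2 * L)) := by
        gcongr
        rw [div_div, le_div_iff₀ (by positivity)]
        linarith
    _ ≤ exp a * exp (-L) / L / 2 := by
        rw [show exp a * exp (-L) / L / 2 = exp (-L) * (exp a / (2 * L)) by ring]
        gcongr

theorem prescribed_mismatch :
    ∃ ϖ₀ ∈ Set.Ioo (0 : ℝ) 1, ∀ ϖ ∈ Set.Ioc (0 : ℝ) ϖ₀,
      ∀ ζ ∈ Set.Icc (-(tauLower ϖ)) (tauLower ϖ),
        |Real.exp (ζ / ϖ) * tauLower ϖ *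
            Real.log (Real.exp 1 * (Real.exp (ζ / ϖ) * tauLower ϖ) / 4) + ϖ + ζ| ≤
          tauLower ϖ / 2 := by
  refine ⟨exp (-10 ^ 8), ⟨exp_pos _, exp_lt_one_iff.2 (by norm_num)⟩, ?_⟩
  rintro ϖ ⟨hϖ0, hϖ⟩ ζ hζ
  obtain ⟨L, rfl⟩ : ∃ L, ϖ = exp (-L) := ⟨-log ϖ, by rw [neg_neg, exp_log hϖ0]⟩
  exact abs_mismatch_exp_neg_le (by simpa using hϖ) (abs_le.2 hζ)
end

section
/- For τ > 0 and (t, ϑ) ∈ ℝ², define κ̂(t, ϑ) := (1 − τ·cosh t·cos ϑ, τ·cosh t·sin ϑ, τ·t) ∈ ℝ³ and λ(t) := 1 − (2/π)·arcsin( τ·(cosh² t + t²) / (2·cosh t) ). Suppose τ·(cosh² t + t²) ≤ 2·cosh t. Then the point κ̂(t, λ(t)·(π/2)) lies on the unit sphere: ‖κ̂(t, λ(t)·(π/2))‖² = 1. (The reparametrized half-catenoidal bridge κ̊(t, ϑ) = κ̂(t, λ(t)·ϑ) sends the lines |ϑ| = π/2 to the boundary sphere 𝕊² = ∂𝔹³.)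 -/
noncomputable def khat (τ t ϑ : ℝ) : EuclideanSpace ℝ (Fin 3) :=
  WithLp.toLp 2 ![1 - τ * Real.cosh t * Real.cos ϑ, τ * Real.cosh t * Real.sin ϑ, τ * t]

noncomputable def lam (τ t : ℝ) : ℝ :=
  1 - (2 / Real.pi) * Real.arcsin (τ * (Real.cosh t ^ 2 + t ^ 2) / (2 * Real.cosh t))

/-!
Since `(1 - (2/π) arcsin x) · π/2 = arccos x`, the angle `ϑ = λ(t) π/2` has `cos ϑ = x` for
`x = τ (cosh² t + t²) / (2 cosh t) ∈ [0, 1]`. Expanding,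
`‖κ̂(t, ϑ)‖² = 1 - 2 τ cosh t cos ϑ + τ² (cosh² t + t²)`, which equals `1` exactly for this `cos ϑ`.
-/

open Real

theorem one_sub_two_div_pi_mul_arcsin_mul_pi_div_two (x : ℝ) :
    (1 - (2 / π) * arcsin x) * (π / 2) = arccos x := by
  rw [arccos_eq_pi_div_two_sub_arcsin]
  field_simp [pi_ne_zero]

theorem norm_khat_sq (τ t ϑ : ℝ) :
    ‖khat τ t ϑ‖ ^ 2 = 1 - 2 * τ * cosh t * cos ϑ + τ ^ 2 * (cosh t ^ 2 + t ^ 2) := by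
  rw [khat, EuclideanSpace.norm_sq_eq, Fin.sum_univ_three]
  simp only [Matrix.cons_val_zero, Matrix.cons_val_one, Matrix.cons_val_two,
    Matrix.head_cons, Matrix.tail_cons, Real.norm_eq_abs, sq_abs]
  linear_combination (τ * cosh t) ^ 2 * sin_sq_add_cos_sq ϑ

theorem norm_khat_sq_eq_one_of_cos {τ t ϑ : ℝ}
    (hϑ : 2 * cosh t * cos ϑ = τ * (cosh t ^ 2 + t ^ 2)) : ‖khat τ t ϑ‖ ^ 2 = 1 := by
  rw [norm_khat_sq]
  linear_combination -τ * hϑ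

theorem cos_lam_mul_pi_div_two {τ t : ℝ} (hτ : 0 < τ)
    (h : τ * (cosh t ^ 2 + t ^ 2) ≤ 2 * cosh t) :
    cos (lam τ t * (π / 2)) = τ * (cosh t ^ 2 + t ^ 2) / (2 * cosh t) := by
  have hc : 0 < 2 * cosh t := by positivity
  rw [lam, one_sub_two_div_pi_mul_arcsin_mul_pi_div_two, cos_arccos]
  · exact (neg_one_lt_zero.trans_le (by positivity)).le
  · exact (div_le_one hc).2 h

theorem bridge_boundary_on_sphere (τ t : ℝ) (hτ : 0 < τ)
    (h : τ * (Real.cosh t ^ 2 + t ^ 2) ≤ 2 * Real.cosh t) :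
    ‖khat τ t (lam τ t * (Real.pi / 2))‖ ^ 2 = 1 := by
  apply norm_khat_sq_eq_one_of_cos
  rw [cos_lam_mul_pi_div_two hτ h, mul_div_cancel₀ _ (by positivity)]
end

section
/- For τ > 0 and t ∈ ℝ with τ·(cosh² t + t²) ≤ 2·cosh t, let κ̂(t, ϑ) := (1 − τ·cosh t·cos ϑ, τ·cosh t·sin ϑ, τ·t), ν(t, ϑ) := (sech t·cos ϑ, −sech t·sin ϑ, tanh t), λ(t) := 1 − (2/π)·arcsin( τ·(cosh² t + t²)/(2·cosh t) ), and θ := λ(t)·(π/2). Then ⟨ κ̂(t, θ), ν(t, θ) ⟩ = (1/2)·τ·t²·sech² t − (1/2)·τ + τ·t·tanh t. (This is the formula for the boundary angle function κ̊*Θ̊ of the catenoidal bridge along 𝕊².) -/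
/-! The angle `λ(t)·π/2` is `arccos` of the arcsin argument, and on the catenoid the
`ϑ`-dependence of `⟨κ̂, ν⟩` collapses to `cos ϑ / cosh t` since `sin² ϑ + cos² ϑ = 1`. -/

open scoped RealInnerProductSpace

noncomputable def nu (t ϑ : ℝ) : EuclideanSpace ℝ (Fin 3) :=
  WithLp.toLp 2 ![(Real.cosh t)⁻¹ * Real.cos ϑ, -((Real.cosh t)⁻¹ * Real.sin ϑ), Real.tanh t]

open Real

theorem inner_khat_nu (τ t ϑ : ℝ) :
    ⟪khat τ t ϑ, nu t ϑ⟫ = (cosh t)⁻¹ * cos ϑ - τ + τ * t * tanh t := by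
  have hcosh : cosh t * (cosh t)⁻¹ = 1 := mul_inv_cancel₀ (cosh_pos t).ne'
  simp only [khat, nu, PiLp.inner_apply, Fin.sum_univ_three, RCLike.inner_apply, conj_trivial,
    Matrix.cons_val_zero, Matrix.cons_val_one, Matrix.cons_val_two, Matrix.head_cons,
    Matrix.tail_cons]
  linear_combination (-τ * (sin ϑ ^ 2 + cos ϑ ^ 2)) * hcosh - τ * sin_sq_add_cos_sq ϑ

theorem lam_mul_pi_div_two (τ t : ℝ) :
    lam τ t * (π / 2) = arccos (τ * (cosh t ^ 2 + t ^ 2) / (2 * cosh t)) := by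
  rw [lam, arccos_eq_pi_div_two_sub_arcsin]
  field_simp

theorem boundary_angle_formula (τ t : ℝ) (hτ : 0 < τ)
    (h : τ * (Real.cosh t ^ 2 + t ^ 2) ≤ 2 * Real.cosh t) :
    ⟪khat τ t (lam τ t * (Real.pi / 2)), nu t (lam τ t * (Real.pi / 2))⟫ =
      (1 / 2) * τ * t ^ 2 * ((Real.cosh t)⁻¹) ^ 2 - (1 / 2) * τ +
        τ * t * Real.tanh t := by
  have hcosh : 0 < cosh t := cosh_pos t
  have hle : τ * (cosh t ^ 2 + t ^ 2) / (2 * cosh t) ≤ 1 := (div_le_one (by positivity)).2 h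
  have hge : -1 ≤ τ * (cosh t ^ 2 + t ^ 2) / (2 * cosh t) := by
    have : 0 ≤ τ * (cosh t ^ 2 + t ^ 2) / (2 * cosh t) := by positivity
    linarith
  rw [inner_khat_nu, lam_mul_pi_div_two, cos_arccos hge hle]
  field_simp
  ring
end
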